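/- arXiv:2201.05569 — 6 statements merged into one kernel-verified Lean document; each statement's English description precedes it below -/
import Mathlib

section
/- Let $s_1,\dots,s_n$ and $t_1,\dots,t_n$ be real numbers and $c$ a real number such that $s_i + t_i = c$ for all $i$. Then equality $(\sum_{i=1}^n s_i)(\sum_{i=1}^n t_i) = n \sum_{i=1}^n s_i t_i$ holds if and only if all the numbers $s_i$ $(1 \le i \le n)$ are equal to their arithmetic mean (i.e., all $s_i$ are equal), assuming $n \ge 1$. -/
/-! Substituting `t i = c - s i` turns `(∑ s) (∑ t) - n ∑ s t` into `n ∑ s i ^ 2 - (∑ s) ^ 2`,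
and `n` times this is the sum of squares `∑ (n s i - ∑ s) ^ 2`, which vanishes exactly when
every `s i` is the mean. -/

open SimpleGraph Set

/-- A `(Y,Y')`-distance-biregular graph: a finite connected bipartite graph in which
every vertex is distance-regularized, and vertices in the same color class share the
same intersection numbers (`c`, `b` for class `Y` and `c'`, `b'` for class `Y'`),
while the two color classes have different intersection arrays.
`D` (resp. `D'`) is the common eccentricity of vertices in `Y` (resp. `Y'`). -/
structure DBRG (V : Type) [Fintype V] where
  G : SimpleGraph V
  conn : G.Connected
  Y : Finset V
  Y' : Finset V
  Yne : Y.Nonempty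
  Y'ne : Y'.Nonempty
  cover : ∀ v, v ∈ Y ∨ v ∈ Y'
  disj : ∀ v, ¬(v ∈ Y ∧ v ∈ Y')
  bip : ∀ u v, G.Adj u v → (u ∈ Y ↔ v ∈ Y')
  D : ℕ
  D' : ℕ
  eccY : ∀ x ∈ Y, (∃ y, G.dist x y = D) ∧ ∀ y, G.dist x y ≤ D
  eccY' : ∀ x ∈ Y', (∃ y, G.dist x y = D') ∧ ∀ y, G.dist x y ≤ D'
  c : ℕ → ℕ
  b : ℕ → ℕ
  c' : ℕ → ℕ
  b' : ℕ → ℕ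
  hc : ∀ i, 1 ≤ i → ∀ x ∈ Y, ∀ z, G.dist x z = i →
    {w | G.Adj z w ∧ G.dist x w = i - 1}.ncard = c i
  hb : ∀ i, ∀ x ∈ Y, ∀ z, G.dist x z = i →
    {w | G.Adj z w ∧ G.dist x w = i + 1}.ncard = b i
  hc' : ∀ i, 1 ≤ i → ∀ x ∈ Y', ∀ z, G.dist x z = i →
    {w | G.Adj z w ∧ G.dist x w = i - 1}.ncard = c' i
  hb' : ∀ i, ∀ x ∈ Y', ∀ z, G.dist x z = i →
    {w | G.Adj z w ∧ G.dist x w = i + 1}.ncard = b' i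
  c0 : c 0 = 0
  c'0 : c' 0 = 0
  nonreg : ¬ (∀ i, c i = c' i ∧ b i = b' i)

/-- `Γ` is `2`-`Y`-homogeneous with parameters `γ i`: for all `1 ≤ i ≤ D - 1` and all
`x ∈ Y`, `y ∈ Γ₂(x)`, `z ∈ Γ_{i,i}(x,y)`, the number of common neighbours of `x` and `y`
at distance `i - 1` from `z` equals `γ i` (independently of `x`, `y`, `z`). -/
def DBRG.TwoYHom {V : Type} [Fintype V] (Γ : DBRG V) (γ : ℕ → ℕ) : Prop :=
  ∀ i, 1 ≤ i → i ≤ Γ.D - 1 → ∀ x ∈ Γ.Y, ∀ y, Γ.G.dist x y = 2 →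
    ∀ z, Γ.G.dist x z = i → Γ.G.dist y z = i →
      {w | Γ.G.dist z w = i - 1 ∧ Γ.G.Adj x w ∧ Γ.G.Adj y w}.ncard = γ i

namespace Finset

variable {ι R : Type*} (s : Finset ι)

theorem sum_mul_sum_sub_card_mul_sum_mul_of_add_eq [CommRing R] {f g : ι → R} {c : R}
    (hfg : ∀ i ∈ s, f i + g i = c) :
    (∑ i ∈ s, f i) * (∑ i ∈ s, g i) - #s * ∑ i ∈ s, f i * g i =
      #s * ∑ i ∈ s, f i ^ 2 - (∑ i ∈ s, f i) ^ 2 := by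
  have hg : ∀ i ∈ s, g i = c - f i := fun i hi => eq_sub_of_add_eq' (hfg i hi)
  have hsum_g : ∑ i ∈ s, g i = ∑ i ∈ s, (c - f i) := sum_congr rfl hg
  have hsum_fg : ∑ i ∈ s, f i * g i = ∑ i ∈ s, (c * f i - f i ^ 2) :=
    sum_congr rfl fun i hi => by rw [hg i hi]; ring
  rw [hsum_g, hsum_fg]
  simp only [sum_sub_distrib, sum_const, nsmul_eq_mul, ← mul_sum]
  ring

theorem sum_sq_card_mul_sub_sum [CommRing R] (f : ι → R) :
    ∑ i ∈ s, (#s * f i - ∑ j ∈ s, f j) ^ 2 =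
      #s * (#s * ∑ i ∈ s, f i ^ 2 - (∑ i ∈ s, f i) ^ 2) := by
  simp only [sub_sq, sum_add_distrib, sum_sub_distrib, mul_pow, ← mul_sum, ← sum_mul,
    sum_const, nsmul_eq_mul]
  ring

theorem card_mul_sum_sq_eq_sq_sum_iff [Field R] [LinearOrder R] [IsStrictOrderedRing R]
    (f : ι → R) :
    #s * ∑ i ∈ s, f i ^ 2 = (∑ i ∈ s, f i) ^ 2 ↔ ∀ i ∈ s, f i = (∑ j ∈ s, f j) / #s := by
  obtain rfl | hs := s.eq_empty_or_nonempty
  · simp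
  have hcard : (#s : R) ≠ 0 := by positivity
  calc #s * ∑ i ∈ s, f i ^ 2 = (∑ i ∈ s, f i) ^ 2
      ↔ ∑ i ∈ s, (#s * f i - ∑ j ∈ s, f j) ^ 2 = 0 := by
        rw [sum_sq_card_mul_sub_sum, mul_eq_zero, sub_eq_zero, or_iff_right hcard]
    _ ↔ ∀ i ∈ s, #s * f i = ∑ j ∈ s, f j := by
        simp only [sum_eq_zero_iff_of_nonneg fun i _ => sq_nonneg _, sq_eq_zero_iff, sub_eq_zero]
    _ ↔ ∀ i ∈ s, f i = (∑ j ∈ s, f j) / #s := by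
        simp only [eq_div_iff hcard, mul_comm]

end Finset

theorem stmt_1_general (n : ℕ) (s t : Fin n → ℝ) (c : ℝ) (h : ∀ i, s i + t i = c) :
    (∑ i, s i) * (∑ i, t i) = (n : ℝ) * ∑ i, s i * t i ↔
      ∀ i, s i = (∑ j, s j) / (n : ℝ) := by
  have hdefect := Finset.sum_mul_sum_sub_card_mul_sum_mul_of_add_eq Finset.univ fun i _ => h i
  simp only [Finset.card_univ, Fintype.card_fin] at hdefect
  rw [← sub_eq_zero, hdefect, sub_eq_zero]
  simpa using Finset.card_mul_sum_sq_eq_sq_sum_iff Finset.univ s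

theorem stmt_1 (n : ℕ) (hn : 1 ≤ n) (s t : Fin n → ℝ) (c : ℝ) (h : ∀ i, s i + t i = c) :
    (∑ i, s i) * (∑ i, t i) = (n : ℝ) * ∑ i, s i * t i ↔
      ∀ i, s i = (∑ j, s j) / (n : ℝ) :=
  stmt_1_general n s t c h
end

section
/- Let $\Gamma$ be a finite connected simple graph, $u$ a vertex, $i,j$ nonnegative integers with $i+j$ even, and suppose there exist vertices $v$ with $d(u,v)=i$ and $w$ with $d(u,w)=i+j$ and $d(v,w)=j$. If $\Gamma$ is distance-regular around every vertex with intersection numbers $c_\ell, b_\ell$ depending only on the color class (i.e., $\Gamma$ is distance-biregular with classes $Y, Y'$), $u \in Y$, and $i+j \le D$ where $D$ is the eccentricity of vertices in $Y$, then $c_i \le b_j$ (where $c_i, b_j$ are the intersection numbers of the color class $Y$). -/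
open SimpleGraph Set

/- Proof idea: `w ∈ Y` by parity, since `d(u, w) = i + j` is even. Every neighbour `t` of `v`
with `d(u, t) = i - 1` has `d(w, t) = j + 1`: at most `j + 1` through `v`, and at least
`d(u, w) - d(u, t) = j + 1` by the triangle inequality. So the `c i` neighbours of `v` counted
from `u` are among the `b j` neighbours of `v` counted from `w`. -/

theorem SimpleGraph.Connected.dist_eq_add_one_of_adj {V : Type*} {G : SimpleGraph V}
    (hG : G.Connected) {u v w t : V} (hw : G.dist u w = G.dist u v + G.dist v w)
    (hvt : G.Adj v t) (ht : G.dist u t + 1 = G.dist u v) :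
    G.dist w t = G.dist w v + 1 := by
  have hut : G.dist u w ≤ G.dist u t + G.dist t w := hG.dist_triangle
  have hwt : G.dist w t ≤ G.dist w v + G.dist v t := hG.dist_triangle
  rw [dist_eq_one_iff_adj.mpr hvt] at hwt
  rw [dist_comm (u := t)] at hut
  rw [dist_comm (u := v)] at hw
  omega

namespace DBRG

variable {V : Type} [Fintype V] (Γ : DBRG V)

theorem mem_Y'_iff_notMem_Y (v : V) : v ∈ Γ.Y' ↔ v ∉ Γ.Y :=
  ⟨fun hY' hY => Γ.disj v ⟨hY, hY'⟩, fun hY => (Γ.cover v).resolve_left hY⟩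

open Classical in
noncomputable def coloring : Γ.G.Coloring Bool :=
  Coloring.mk (fun v => decide (v ∈ Γ.Y)) fun {v w} hvw => by
    have := Γ.bip v w hvw
    rw [Γ.mem_Y'_iff_notMem_Y] at this
    by_cases hv : v ∈ Γ.Y <;> simp_all

open Classical in
theorem coloring_apply (v : V) : Γ.coloring v = decide (v ∈ Γ.Y) := rfl

theorem mem_Y_of_even_dist {u w : V} (hu : u ∈ Γ.Y) (h : Even (Γ.G.dist u w)) : w ∈ Γ.Y := by
  obtain ⟨p, hp⟩ := (Γ.conn u w).exists_walk_length_eq_dist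
  have := (Γ.coloring.even_length_iff_congr p).mp (hp ▸ h)
  simpa [coloring_apply, hu] using this

end DBRG

theorem stmt_2_general {V : Type} [Fintype V] (Γ : DBRG V) (u : V) (hu : u ∈ Γ.Y)
    (i j : ℕ) (hpar : Even (i + j))
    (hex : ∃ v w, Γ.G.dist u v = i ∧ Γ.G.dist u w = i + j ∧ Γ.G.dist v w = j) :
    Γ.c i ≤ Γ.b j := by
  obtain ⟨v, w, hv, hw, hvw⟩ := hex
  obtain rfl | hi := Nat.eq_zero_or_pos i
  · simp [Γ.c0]
  have hwY : w ∈ Γ.Y := Γ.mem_Y_of_even_dist hu (hw ▸ hpar)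
  rw [← Γ.hc i hi u hu v hv, ← Γ.hb j w hwY v (by rw [SimpleGraph.dist_comm, hvw])]
  refine Set.ncard_le_ncard (fun t ⟨hvt, ht⟩ => ⟨hvt, ?_⟩) (Set.toFinite _)
  rw [Γ.conn.dist_eq_add_one_of_adj (u := u) (by omega) hvt (by omega),
    SimpleGraph.dist_comm, hvw]

theorem stmt_2 {V : Type} [Fintype V] (Γ : DBRG V) (u : V) (hu : u ∈ Γ.Y)
    (i j : ℕ) (hpar : Even (i + j)) (hD : i + j ≤ Γ.D)
    (hex : ∃ v w, Γ.G.dist u v = i ∧ Γ.G.dist u w = i + j ∧ Γ.G.dist v w = j) :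
    Γ.c i ≤ Γ.b j :=
  stmt_2_general Γ u hu i j hpar hex
end

section
/- Let $\Gamma$ be a $(Y,Y')$-distance-biregular graph. Then $b_1(c_2 - 1) = b'_1(c'_2 - 1)$, where $b_1, c_2$ are intersection numbers of the color class $Y$ and $b'_1, c'_2$ of the class $Y'$. -/
open SimpleGraph Set

/-! For an edge `xy` with `x ∈ Y`, count the edges between `Γ₁(x) ∩ Γ₂(y)` (of size `b'₁`) and
`Γ₂(x) ∩ Γ₁(y)` (of size `b₁`). A bipartite graph has no triangles, so a vertex `w` of the first
set sees, among its `c'₂` neighbours in `Γ₁(y)`, the vertex `x` and otherwise only vertices of the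
second set; symmetrically each vertex of the second set has `c₂ - 1` neighbours in the first. -/

namespace SimpleGraph

variable {V : Type*} {G : SimpleGraph V}

lemma dist_eq_two_of_adj_of_adj (hG : G.CliqueFree 3) {x w z : V} (hxw : G.Adj x w)
    (hwz : G.Adj w z) (hxz : x ≠ z) : G.dist x z = 2 := by
  have hle : G.dist x z ≤ 2 := dist_le (.cons hxw (.cons hwz .nil))
  have hpos : 0 < G.dist x z := (hxw.reachable.trans hwz.reachable).pos_dist_of_ne hxz
  classical
  have hne : G.dist x z ≠ 1 := fun h =>
    hG {x, w, z} (is3Clique_triple_iff.mpr ⟨hxw, dist_eq_one_iff_adj.mp h, hwz⟩)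
  omega

variable [Fintype V] [DecidableRel G.Adj]

variable (G) in
/-- `Γ₁(x) ∩ Γ₂(y)`. -/
noncomputable def farNeighbors (x y : V) : Finset V :=
  Finset.univ.filter fun w => G.Adj x w ∧ G.dist y w = 2

/-- Triangle-freeness: the neighbours of `w ∈ Γ₁(x)` in `Γ₁(y)` are `x` and those in
`Γ₂(x) ∩ Γ₁(y)`. -/
lemma card_filter_adj_farNeighbors_add_one (hG : G.CliqueFree 3) {x y w : V}
    (hxy : G.Adj x y) (hxw : G.Adj x w) :
    ((G.farNeighbors y x).filter (G.Adj w)).card + 1 =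
      (Finset.univ.filter fun z => G.Adj w z ∧ G.dist y z = 1).card := by
  have hx : x ∉ (G.farNeighbors y x).filter (G.Adj w) := by simp [farNeighbors]
  classical
  rw [← Finset.card_insert_of_notMem hx]
  congr 1
  ext z
  simp only [farNeighbors, Finset.mem_insert, Finset.mem_filter, Finset.mem_univ, true_and,
    dist_eq_one_iff_adj]
  constructor
  · rintro (rfl | ⟨⟨hyz, -⟩, hwz⟩)
    · exact ⟨hxw.symm, hxy.symm⟩
    · exact ⟨hwz, hyz⟩
  · rintro ⟨hwz, hyz⟩
    by_cases hzx : z = x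
    · exact .inl hzx
    · exact .inr ⟨⟨hyz, dist_eq_two_of_adj_of_adj hG hxw hwz (Ne.symm hzx)⟩, hwz⟩

lemma card_farNeighbors_mul_eq (hG : G.CliqueFree 3) {x y : V} (hxy : G.Adj x y) {m n : ℕ}
    (hm : ∀ w ∈ G.farNeighbors x y,
      (Finset.univ.filter fun z => G.Adj w z ∧ G.dist y z = 1).card = m)
    (hn : ∀ z ∈ G.farNeighbors y x,
      (Finset.univ.filter fun w => G.Adj z w ∧ G.dist x w = 1).card = n) :
    ((G.farNeighbors y x).card : ℤ) * (n - 1) = (G.farNeighbors x y).card * (m - 1) := by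
  have hA : ∀ w ∈ G.farNeighbors x y,
      (((G.farNeighbors y x).filter (G.Adj w)).card : ℤ) = m - 1 := fun w hw => by
    have := card_filter_adj_farNeighbors_add_one hG hxy (Finset.mem_filter.mp hw).2.1
    rw [hm w hw] at this
    omega
  have hB : ∀ z ∈ G.farNeighbors y x,
      (((G.farNeighbors x y).filter (G.Adj z)).card : ℤ) = n - 1 := fun z hz => by
    have := card_filter_adj_farNeighbors_add_one hG hxy.symm (Finset.mem_filter.mp hz).2.1
    rw [hn z hz] at this
    omega
  have hcount := Finset.sum_card_bipartiteAbove_eq_sum_card_bipartiteBelow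
    (s := G.farNeighbors x y) (t := G.farNeighbors y x) (r := G.Adj)
  simp only [Finset.bipartiteAbove, Finset.bipartiteBelow, G.adj_comm _ (_ : V)] at hcount
  calc ((G.farNeighbors y x).card : ℤ) * (n - 1)
      = ∑ z ∈ G.farNeighbors y x, (((G.farNeighbors x y).filter (G.Adj z)).card : ℤ) := by
        rw [Finset.sum_congr rfl hB, Finset.sum_const, nsmul_eq_mul]
    _ = ∑ w ∈ G.farNeighbors x y, (((G.farNeighbors y x).filter (G.Adj w)).card : ℤ) := by
        exact_mod_cast hcount.symm
    _ = (G.farNeighbors x y).card * (m - 1) := by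
        rw [Finset.sum_congr rfl hA, Finset.sum_const, nsmul_eq_mul]

end SimpleGraph

namespace DBRG

variable {V : Type} [Fintype V] (Γ : DBRG V)

lemma mem_Y_iff_notMem_Y_of_adj {u v : V} (huv : Γ.G.Adj u v) : u ∈ Γ.Y ↔ v ∉ Γ.Y := by
  rw [Γ.bip u v huv]
  exact ⟨fun hv hvY => Γ.disj v ⟨hvY, hv⟩, (Γ.cover v).resolve_left⟩

lemma colorable_two : Γ.G.Colorable 2 := by
  classical
  exact (Coloring.mk (fun v => decide (v ∈ Γ.Y)) fun huv => by
    have := Γ.mem_Y_iff_notMem_Y_of_adj huv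
    simp only [ne_eq, decide_eq_decide]
    tauto).colorable

lemma exists_adj (x : V) : ∃ y, Γ.G.Adj x y := by
  obtain ⟨u, hu⟩ := Γ.Yne
  obtain ⟨v, hv⟩ := Γ.Y'ne
  have : Nontrivial V := nontrivial_of_ne u v fun h => Γ.disj u ⟨hu, h ▸ hv⟩
  exact Γ.conn.preconnected.exists_adj_of_nontrivial x

end DBRG

theorem stmt_6_general {V : Type} [Fintype V] (Γ : DBRG V) :
    (Γ.b 1 : ℤ) * ((Γ.c 2 : ℤ) - 1) = (Γ.b' 1 : ℤ) * ((Γ.c' 2 : ℤ) - 1) := by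
  classical
  obtain ⟨x, hx⟩ := Γ.Yne
  obtain ⟨y, hxy⟩ := Γ.exists_adj x
  have hy : y ∈ Γ.Y' := (Γ.bip x y hxy).mp hx
  have hcard {P : V → Prop} [DecidablePred P] {k : ℕ} (h : {w | P w}.ncard = k) :
      (Finset.univ.filter P).card = k := by
    rwa [← Finset.coe_filter_univ, Set.ncard_coe_finset] at h
  have hb : (Γ.G.farNeighbors y x).card = Γ.b 1 :=
    hcard (Γ.hb 1 x hx y (dist_eq_one_iff_adj.mpr hxy))
  have hb' : (Γ.G.farNeighbors x y).card = Γ.b' 1 :=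
    hcard (Γ.hb' 1 y hy x (dist_eq_one_iff_adj.mpr hxy.symm))
  rw [← hb, ← hb']
  exact SimpleGraph.card_farNeighbors_mul_eq (Γ.colorable_two.cliqueFree (by norm_num)) hxy
    (fun w hw => hcard (Γ.hc' 2 le_add_self y hy w (Finset.mem_filter.mp hw).2.2))
    (fun z hz => hcard (Γ.hc 2 le_add_self x hx z (Finset.mem_filter.mp hz).2.2))

theorem stmt_6 {V : Type} [Fintype V] (Γ : DBRG V) (hD : 3 ≤ Γ.D) :
    (Γ.b 1 : ℤ) * ((Γ.c 2 : ℤ) - 1) = (Γ.b' 1 : ℤ) * ((Γ.c' 2 : ℤ) - 1) :=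
  stmt_6_general Γ
end

section
/- Let $\Gamma$ be a $(Y,Y')$-distance-biregular graph with $D \ge 3$ and $k' \ge 3$ (where $k'$ is the valency of vertices in $Y'$). For every integer $i$ with $1 \le i \le \min\{D-1, D'-1\}$ the quantity $\Delta_i$ is nonnegative, where $\Delta_i = (b_{i-1}-1)(c_{i+1}-1) - p^i_{2,i}(c'_2 - 1)$ if $i$ is even and $\Delta_i = (b'_{i-1}-1)(c'_{i+1}-1) - p^i_{2,i}(c'_2 - 1)$ if $i$ is odd. Here $p^i_{2,i} = |\Gamma_2(x) \cap \Gamma_i(z)|$ for $x \in Y$, $z \in \Gamma_i(x)$. -/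
open SimpleGraph Set

/-!
Let `S = Γ₂(x) ∩ Γᵢ(z)` and let `W₋`, `W₊` be the neighbours of `x` at distance `i - 1`, `i + 1`
from `z`. By bipartiteness every common neighbour of `x` and `y ∈ S` lies in `W₋ ∪ W₊`, so
`s_y + t_y = c₂`, where `s_y`, `t_y` count the neighbours of `y` in `W₋`, `W₊`. Double counting
gives `∑ s_y = |W₋| (β - 1)`, `∑ t_y = |W₊| (γ - 1)` and `∑ s_y t_y = |W₋| |W₊| (c'₂ - 1)`, where
`β`, `γ` are `b_{i-1}`, `c_{i+1}` of the colour class of `z` (the `- 1` discounts `x` itself).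
Cauchy–Schwarz in the form `|S| ∑ s t ≤ (∑ s)(∑ t)`, valid because `s + t` is constant, yields
`|S| (c'₂ - 1) ≤ (β - 1)(γ - 1)`.
-/

open Finset

theorem Finset.card_mul_sum_mul_le_sum_mul_sum {ι R : Type*} [CommRing R] [LinearOrder R]
    [IsStrictOrderedRing R] {S : Finset ι} {s t : ι → R} {c : R}
    (h : ∀ y ∈ S, s y + t y = c) :
    #S * ∑ y ∈ S, s y * t y ≤ (∑ y ∈ S, s y) * ∑ y ∈ S, t y := by
  have ht : ∀ y ∈ S, t y = c - s y := fun y hy => eq_sub_of_add_eq' (h y hy)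
  rw [sum_congr rfl fun y hy => by rw [ht y hy], sum_congr rfl ht]
  simp only [mul_sub, sum_sub_distrib, ← sum_mul, sum_const, nsmul_eq_mul, ← sq]
  linear_combination (sq_sum_le_card_mul_sum_sq : (∑ y ∈ S, s y) ^ 2 ≤ #S * ∑ y ∈ S, s y ^ 2)

theorem Finset.sum_card_bipartiteAbove_eq_card_mul {α β : Type*} (r : α → β → Prop)
    [∀ a b, Decidable (r a b)] {s : Finset α} {t : Finset β} {m : ℕ}
    (h : ∀ b ∈ t, #(s.bipartiteBelow r b) = m) :
    ∑ a ∈ s, #(t.bipartiteAbove r a) = #t * m := by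
  rw [sum_card_bipartiteAbove_eq_sum_card_bipartiteBelow, sum_congr rfl h, sum_const, smul_eq_mul]

namespace SimpleGraph

variable {V : Type} {G : SimpleGraph V}

theorem Walk.dist_getVert_of_length_eq_dist {u v : V} {p : G.Walk u v}
    (hp : p.length = G.dist u v) {n : ℕ} (hn : n ≤ p.length) : G.dist u (p.getVert n) = n := by
  rw [← length_eq_dist_of_subwalk hp (p.isSubwalk_take n), Walk.take_length]
  omega

theorem exists_adj_dist_eq_add_one {z y : V} {n : ℕ} (h : n < G.dist z y) :
    ∃ u v, G.Adj u v ∧ G.dist z u = n ∧ G.dist z v = n + 1 := by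
  obtain ⟨p, hp⟩ := exists_walk_of_dist_ne_zero (G := G) (u := z) (v := y) (by omega)
  exact ⟨_, _, p.adj_getVert_succ (by omega), p.dist_getVert_of_length_eq_dist hp (by omega),
    p.dist_getVert_of_length_eq_dist hp (by omega)⟩

theorem exists_adj_dist_eq_sub_one {z x : V} (h : G.dist z x ≠ 0) :
    ∃ w, G.Adj x w ∧ G.dist z w = G.dist z x - 1 := by
  obtain ⟨p, hp⟩ := exists_walk_of_dist_ne_zero h
  have hadj := p.adj_getVert_succ (i := G.dist z x - 1) (by rw [hp]; omega)
  rw [show G.dist z x - 1 + 1 = p.length by omega, p.getVert_length] at hadj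
  exact ⟨_, hadj.symm, p.dist_getVert_of_length_eq_dist hp (by omega : G.dist z x - 1 ≤ _)⟩

theorem exists_adj_dist_eq_add_one_of_ncard_eq [Finite V] {z y x : V} {n β : ℕ}
    (hβ : ∀ u, G.dist z u = n → {w | G.Adj u w ∧ G.dist z w = n + 1}.ncard = β)
    (hy : n < G.dist z y) (hx : G.dist z x = n) : ∃ w, G.Adj x w ∧ G.dist z w = n + 1 := by
  obtain ⟨u, v, huv, hu, hv⟩ := exists_adj_dist_eq_add_one hy
  have hβ0 : β ≠ 0 := hβ u hu ▸ Set.ncard_ne_zero_of_mem (a := v) ⟨huv, hv⟩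
  exact Set.nonempty_of_ncard_ne_zero (hβ x hx ▸ hβ0)

end SimpleGraph

namespace DBRG

variable {V : Type} [Fintype V] (Γ : DBRG V)

theorem mem_Y'_iff {v : V} : v ∈ Γ.Y' ↔ v ∉ Γ.Y :=
  ⟨fun h h' => Γ.disj v ⟨h', h⟩, (Γ.cover v).resolve_left⟩

theorem even_dist_iff (u v : V) : Even (Γ.G.dist u v) ↔ (u ∈ Γ.Y ↔ v ∈ Γ.Y) := by
  classical
  let c : Γ.G.Coloring Bool := Coloring.mk (fun v => decide (v ∈ Γ.Y)) fun {u v} h => by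
    simp [Γ.bip u v h, Γ.mem_Y'_iff]
  obtain ⟨p, hp⟩ := Γ.conn.exists_walk_length_eq_dist u v
  rw [← hp, c.even_length_iff_congr p]
  change (decide (u ∈ Γ.Y) = true ↔ decide (v ∈ Γ.Y) = true) ↔ _
  simp only [decide_eq_true_eq]

theorem dist_ne_of_adj {w y : V} (h : Γ.G.Adj w y) (z : V) : Γ.G.dist z w ≠ Γ.G.dist z y := by
  intro heq
  have hw := Γ.even_dist_iff z w
  have hy := Γ.even_dist_iff z y
  have hwy := Γ.bip w y h
  rw [heq] at hw
  rw [Γ.mem_Y'_iff] at hwy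
  tauto

theorem dist_of_adj {w y : V} (h : Γ.G.Adj w y) (z : V) :
    Γ.G.dist z y = Γ.G.dist z w + 1 ∨ Γ.G.dist z y + 1 = Γ.G.dist z w := by
  have := Γ.dist_ne_of_adj h z
  rcases h.diff_dist_adj (u := z) with h | h | h <;> omega

theorem dist_eq_two_of_adj_adj {x w u : V} (hxw : Γ.G.Adj x w) (hwu : Γ.G.Adj w u) (hux : u ≠ x) :
    Γ.G.dist x u = 2 := by
  have hxu : Γ.G.dist x u ≠ 0 := fun h => hux (Γ.conn.dist_eq_zero_iff.mp h).symm
  have := Γ.dist_of_adj hwu x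
  rw [dist_eq_one_iff_adj.mpr hxw] at this
  omega

section Counting

open scoped Classical

-- The intersection numbers `b`, `c` and the eccentricity of the colour class of `z`.
noncomputable def bAt (z : V) : ℕ → ℕ := if z ∈ Γ.Y then Γ.b else Γ.b'

noncomputable def cAt (z : V) : ℕ → ℕ := if z ∈ Γ.Y then Γ.c else Γ.c'

noncomputable def eccAt (z : V) : ℕ := if z ∈ Γ.Y then Γ.D else Γ.D'

/-- `Γ₂(x) ∩ Γᵢ(z)`, whose size is `p^i_{2,i}` when `d(x, z) = i`. -/
noncomputable def twoSphereInter (x z : V) (i : ℕ) : Finset V :=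
  {y | Γ.G.dist x y = 2 ∧ Γ.G.dist z y = i}

noncomputable def neighborFinsetAtDist (x z : V) (j : ℕ) : Finset V :=
  {w | Γ.G.Adj x w ∧ Γ.G.dist z w = j}

variable {Γ}

theorem ncard_adj_dist_add_one {z u : V} {j : ℕ} (h : Γ.G.dist z u = j) :
    {w | Γ.G.Adj u w ∧ Γ.G.dist z w = j + 1}.ncard = Γ.bAt z j := by
  unfold bAt
  split_ifs with hz
  · exact Γ.hb j z hz u h
  · exact Γ.hb' j z (Γ.mem_Y'_iff.2 hz) u h

theorem ncard_adj_dist_sub_one {z u : V} {j : ℕ} (hj : 1 ≤ j) (h : Γ.G.dist z u = j) :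
    {w | Γ.G.Adj u w ∧ Γ.G.dist z w = j - 1}.ncard = Γ.cAt z j := by
  unfold cAt
  split_ifs with hz
  · exact Γ.hc j hj z hz u h
  · exact Γ.hc' j hj z (Γ.mem_Y'_iff.2 hz) u h

theorem exists_dist_eq_eccAt (z : V) : ∃ y, Γ.G.dist z y = Γ.eccAt z := by
  unfold eccAt
  split_ifs with hz
  · exact (Γ.eccY z hz).1
  · exact (Γ.eccY' z (Γ.mem_Y'_iff.2 hz)).1

variable {x z : V} {i : ℕ}

theorem card_filter_adj_add_card_filter_adj (hx : x ∈ Γ.Y) {y : V}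
    (hy : y ∈ Γ.twoSphereInter x z i) :
    #{w ∈ Γ.neighborFinsetAtDist x z (i - 1) | Γ.G.Adj w y} +
      #{w ∈ Γ.neighborFinsetAtDist x z (i + 1) | Γ.G.Adj w y} = Γ.c 2 := by
  simp only [twoSphereInter, mem_filter, Finset.mem_univ, true_and] at hy
  have hdisj : Disjoint {w ∈ Γ.neighborFinsetAtDist x z (i - 1) | Γ.G.Adj w y}
      {w ∈ Γ.neighborFinsetAtDist x z (i + 1) | Γ.G.Adj w y} := by
    simp only [Finset.disjoint_left, neighborFinsetAtDist, mem_filter, Finset.mem_univ, true_and]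
    intro w h₁ h₂
    omega
  rw [← card_union_of_disjoint hdisj, ← Γ.hc 2 one_le_two x hx y hy.1, ← Set.ncard_coe_finset]
  congr 1
  ext w
  simp only [neighborFinsetAtDist, coe_union, coe_filter, Finset.mem_filter, Finset.mem_univ,
    true_and, Set.mem_union, Set.mem_ofPred_eq, Nat.reduceSub, dist_eq_one_iff_adj]
  constructor
  · rintro (⟨⟨hxw, -⟩, hwy⟩ | ⟨⟨hxw, -⟩, hwy⟩) <;> exact ⟨hwy.symm, hxw⟩
  · rintro ⟨hyw, hxw⟩
    rcases Γ.dist_of_adj hyw z with h | h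
    · exact .inr ⟨⟨hxw, by omega⟩, hyw.symm⟩
    · exact .inl ⟨⟨hxw, by omega⟩, hyw.symm⟩

theorem card_filter_adj_add_one (hz : Γ.G.dist x z = i) {w : V} (hxw : Γ.G.Adj x w) :
    #{y ∈ Γ.twoSphereInter x z i | Γ.G.Adj w y} + 1 =
      {u | Γ.G.Adj w u ∧ Γ.G.dist z u = i}.ncard := by
  have hxmem : x ∈ ({u | Γ.G.Adj w u ∧ Γ.G.dist z u = i} : Finset V) := by
    simpa [hxw.symm, dist_comm] using hz
  have heq : {y ∈ Γ.twoSphereInter x z i | Γ.G.Adj w y} =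
      ({u | Γ.G.Adj w u ∧ Γ.G.dist z u = i} : Finset V).erase x := by
    ext u
    simp only [twoSphereInter, mem_filter, Finset.mem_erase, Finset.mem_univ, true_and]
    constructor
    · rintro ⟨⟨hxu, hzu⟩, hwu⟩
      exact ⟨by rintro rfl; simp at hxu, hwu, hzu⟩
    · rintro ⟨hux, hwu, hzu⟩
      exact ⟨⟨Γ.dist_eq_two_of_adj_adj hxw hwu hux, hzu⟩, hwu⟩
  rw [heq, card_erase_add_one hxmem, ← Set.ncard_coe_finset, coe_filter]
  simp

theorem card_filter_adj_adj_add_one (hx : x ∈ Γ.Y) {w w' : V}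
    (hw : w ∈ Γ.neighborFinsetAtDist x z (i - 1)) (hw' : w' ∈ Γ.neighborFinsetAtDist x z (i + 1)) :
    #{y ∈ Γ.twoSphereInter x z i | Γ.G.Adj w y ∧ Γ.G.Adj w' y} + 1 = Γ.c' 2 := by
  simp only [neighborFinsetAtDist, mem_filter, Finset.mem_univ, true_and] at hw hw'
  have hww' : Γ.G.dist w w' = 2 :=
    Γ.dist_eq_two_of_adj_adj hw.1.symm hw'.1 fun h => by rw [h] at hw'; omega
  rw [← Γ.hc' 2 one_le_two w ((Γ.bip x w hw.1).1 hx) w' hww']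
  have hxmem : x ∈ ({u | Γ.G.Adj w' u ∧ Γ.G.dist w u = 2 - 1} : Finset V) := by
    simpa [hw'.1.symm] using hw.1.symm
  have heq : {y ∈ Γ.twoSphereInter x z i | Γ.G.Adj w y ∧ Γ.G.Adj w' y} =
      ({u | Γ.G.Adj w' u ∧ Γ.G.dist w u = 2 - 1} : Finset V).erase x := by
    ext u
    simp only [twoSphereInter, mem_filter, Finset.mem_erase, Finset.mem_univ, true_and,
      Nat.reduceSub, dist_eq_one_iff_adj]
    constructor
    · rintro ⟨⟨hxu, -⟩, hwu, hw'u⟩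
      exact ⟨by rintro rfl; simp at hxu, hw'u, hwu⟩
    · rintro ⟨hux, hw'u, hwu⟩
      have h₁ := Γ.dist_of_adj hwu z
      have h₂ := Γ.dist_of_adj hw'u z
      exact ⟨⟨Γ.dist_eq_two_of_adj_adj hw.1 hwu hux, by omega⟩, hwu, hw'u⟩
  rw [heq, card_erase_add_one hxmem, ← Set.ncard_coe_finset, coe_filter]
  simp

theorem neighborFinsetAtDist_sub_one_nonempty (hz : Γ.G.dist x z = i) (hi : 1 ≤ i) :
    (Γ.neighborFinsetAtDist x z (i - 1)).Nonempty := by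
  have hzx : Γ.G.dist z x = i := SimpleGraph.dist_comm.trans hz
  obtain ⟨w, hxw, hzw⟩ := exists_adj_dist_eq_sub_one (G := Γ.G) (by omega : Γ.G.dist z x ≠ 0)
  exact ⟨w, by simp [neighborFinsetAtDist, hxw, hzw, hzx]⟩

theorem neighborFinsetAtDist_add_one_nonempty (hz : Γ.G.dist x z = i) (hecc : i < Γ.eccAt z) :
    (Γ.neighborFinsetAtDist x z (i + 1)).Nonempty := by
  obtain ⟨y, hy⟩ := Γ.exists_dist_eq_eccAt z
  obtain ⟨w, hxw, hzw⟩ := exists_adj_dist_eq_add_one_of_ncard_eq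
    (fun u hu => ncard_adj_dist_add_one hu) (hy ▸ hecc) (SimpleGraph.dist_comm.trans hz)
  exact ⟨w, by simp [neighborFinsetAtDist, hxw, hzw]⟩

theorem card_filter_adj_add_one_eq_bAt (hz : Γ.G.dist x z = i) (hi : 1 ≤ i) {w : V}
    (hw : w ∈ Γ.neighborFinsetAtDist x z (i - 1)) :
    #{y ∈ Γ.twoSphereInter x z i | Γ.G.Adj w y} + 1 = Γ.bAt z (i - 1) := by
  simp only [neighborFinsetAtDist, mem_filter, Finset.mem_univ, true_and] at hw
  rw [card_filter_adj_add_one hz hw.1, ← ncard_adj_dist_add_one hw.2, Nat.sub_add_cancel hi]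

theorem card_filter_adj_add_one_eq_cAt (hz : Γ.G.dist x z = i) {w : V}
    (hw : w ∈ Γ.neighborFinsetAtDist x z (i + 1)) :
    #{y ∈ Γ.twoSphereInter x z i | Γ.G.Adj w y} + 1 = Γ.cAt z (i + 1) := by
  simp only [neighborFinsetAtDist, mem_filter, Finset.mem_univ, true_and] at hw
  rw [card_filter_adj_add_one hz hw.1, ← ncard_adj_dist_sub_one (by omega) hw.2,
    Nat.add_sub_cancel]

theorem card_twoSphereInter_mul_le (hx : x ∈ Γ.Y) (hz : Γ.G.dist x z = i) (hi : 1 ≤ i)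
    (hecc : i < Γ.eccAt z) :
    (#(Γ.twoSphereInter x z i) : ℤ) * (Γ.c' 2 - 1) ≤
      (Γ.bAt z (i - 1) - 1) * (Γ.cAt z (i + 1) - 1) := by
  set S := Γ.twoSphereInter x z i
  set W₁ := Γ.neighborFinsetAtDist x z (i - 1)
  set W₂ := Γ.neighborFinsetAtDist x z (i + 1)
  obtain ⟨w₁, hw₁⟩ := neighborFinsetAtDist_sub_one_nonempty hz hi
  obtain ⟨w₂, hw₂⟩ := neighborFinsetAtDist_add_one_nonempty hz hecc
  have hβ := fun w (hw : w ∈ W₁) => card_filter_adj_add_one_eq_bAt hz hi hw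
  have hγ := fun w (hw : w ∈ W₂) => card_filter_adj_add_one_eq_cAt hz hw
  have hs : ∑ y ∈ S, #{w ∈ W₁ | Γ.G.Adj w y} = #W₁ * (Γ.bAt z (i - 1) - 1) :=
    sum_card_bipartiteAbove_eq_card_mul (fun y w => Γ.G.Adj w y)
      fun w hw => Nat.eq_sub_of_add_eq (hβ w hw)
  have ht : ∑ y ∈ S, #{w ∈ W₂ | Γ.G.Adj w y} = #W₂ * (Γ.cAt z (i + 1) - 1) :=
    sum_card_bipartiteAbove_eq_card_mul (fun y w => Γ.G.Adj w y)
      fun w hw => Nat.eq_sub_of_add_eq (hγ w hw)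
  have hst : ∑ y ∈ S, #{w ∈ W₁ | Γ.G.Adj w y} * #{w ∈ W₂ | Γ.G.Adj w y} =
      #(W₁ ×ˢ W₂) * (Γ.c' 2 - 1) := by
    rw [← sum_card_bipartiteAbove_eq_card_mul (fun y (p : V × V) => Γ.G.Adj p.1 y ∧ Γ.G.Adj p.2 y)
      fun p hp => Nat.eq_sub_of_add_eq
        (card_filter_adj_adj_add_one hx (mem_product.1 hp).1 (mem_product.1 hp).2)]
    refine sum_congr rfl fun y _ => ?_
    rw [← card_product, ← filter_product]
    rfl
  have hCS : #S * ∑ y ∈ S, #{w ∈ W₁ | Γ.G.Adj w y} * #{w ∈ W₂ | Γ.G.Adj w y} ≤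
      (∑ y ∈ S, #{w ∈ W₁ | Γ.G.Adj w y}) * ∑ y ∈ S, #{w ∈ W₂ | Γ.G.Adj w y} := by
    have := card_mul_sum_mul_le_sum_mul_sum (R := ℤ) (S := S)
      (s := fun y => (#{w ∈ W₁ | Γ.G.Adj w y} : ℤ)) (t := fun y => (#{w ∈ W₂ | Γ.G.Adj w y} : ℤ))
      (c := Γ.c 2) fun y hy => by exact_mod_cast card_filter_adj_add_card_filter_adj hx hy
    exact_mod_cast this
  rw [hs, ht, hst, card_product] at hCS
  have hpos : 0 < #W₁ * #W₂ := Nat.mul_pos (card_pos.2 ⟨w₁, hw₁⟩) (card_pos.2 ⟨w₂, hw₂⟩)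
  rw [← hβ w₁ hw₁, ← hγ w₂ hw₂, ← card_filter_adj_adj_add_one hx hw₁ hw₂] at hCS ⊢
  simp only [Nat.add_sub_cancel, Nat.cast_add, Nat.cast_one, add_sub_cancel_right] at hCS ⊢
  exact_mod_cast Nat.le_of_mul_le_mul_left (by linarith) hpos

end Counting

end DBRG

theorem stmt_7_general {V : Type} [Fintype V] (Γ : DBRG V)
    (i : ℕ) (hi1 : 1 ≤ i) (hi2 : i ≤ min (Γ.D - 1) (Γ.D' - 1))
    (x : V) (hx : x ∈ Γ.Y) (z : V) (hz : Γ.G.dist x z = i)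
    (p : ℕ) (hp : p = {w | Γ.G.dist x w = 2 ∧ Γ.G.dist z w = i}.ncard) :
    0 ≤ (if Even i then ((Γ.b (i - 1) : ℤ) - 1) * ((Γ.c (i + 1) : ℤ) - 1)
          else ((Γ.b' (i - 1) : ℤ) - 1) * ((Γ.c' (i + 1) : ℤ) - 1))
        - (p : ℤ) * ((Γ.c' 2 : ℤ) - 1) := by
  have hzY : z ∈ Γ.Y ↔ Even i := by rw [← hz, Γ.even_dist_iff]; simp [hx]
  have hecc : i < Γ.eccAt z := by
    unfold DBRG.eccAt
    split_ifs <;> omega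
  have hp' : p = #(Γ.twoSphereInter x z i) := by
    rw [hp, ← Set.ncard_coe_finset]
    simp [DBRG.twoSphereInter]
  have harrays : (if Even i then ((Γ.b (i - 1) : ℤ) - 1) * ((Γ.c (i + 1) : ℤ) - 1)
      else ((Γ.b' (i - 1) : ℤ) - 1) * ((Γ.c' (i + 1) : ℤ) - 1)) =
      ((Γ.bAt z (i - 1) : ℤ) - 1) * ((Γ.cAt z (i + 1) : ℤ) - 1) := by
    by_cases h : Even i <;> simp [DBRG.bAt, DBRG.cAt, hzY, h]
  rw [harrays, hp']
  linarith [Γ.card_twoSphereInter_mul_le hx hz hi1 hecc]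

theorem stmt_7 {V : Type} [Fintype V] (Γ : DBRG V) (hk' : 3 ≤ Γ.b' 0) (hD : 3 ≤ Γ.D)
    (i : ℕ) (hi1 : 1 ≤ i) (hi2 : i ≤ min (Γ.D - 1) (Γ.D' - 1))
    (x : V) (hx : x ∈ Γ.Y) (z : V) (hz : Γ.G.dist x z = i)
    (p : ℕ) (hp : p = {w | Γ.G.dist x w = 2 ∧ Γ.G.dist z w = i}.ncard) :
    0 ≤ (if Even i then ((Γ.b (i - 1) : ℤ) - 1) * ((Γ.c (i + 1) : ℤ) - 1)
          else ((Γ.b' (i - 1) : ℤ) - 1) * ((Γ.c' (i + 1) : ℤ) - 1))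
        - (p : ℤ) * ((Γ.c' 2 : ℤ) - 1) :=
  stmt_7_general Γ i hi1 hi2 x hx z hz p hp
end

section
/- Let $\Gamma$ be a $2$-$Y$-homogeneous $(Y,Y')$-distance-biregular graph with $D \ge 3$, $c'_2 \ge 2$, and $\gamma_2 \ne 0$. Then $(k'-2)(\gamma_2 - 1) = (c_2 - 1)(c'_2 - 2)$, where $k'$ is the valency of vertices in $Y'$, $c_2, c'_2$ are intersection numbers of the two color classes, and $\gamma_2 = |\Gamma_1(z)\cap\Gamma_1(x)\cap\Gamma_1(y)|$ for $x \in Y$, $y \in \Gamma_2(x)$, $z \in \Gamma_2(x)\cap\Gamma_2(y)$. -/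
open SimpleGraph Set

/-!
Fix `u ∈ Y`, a neighbour `v` of `u` and a neighbour `w ≠ u` of `v`, so that `∂(u, w) = 2`, and
count the edges `pq` with `p` a common neighbour of `u` and `w` other than `v` and `q` a
neighbour of `v` other than `u` and `w`. There are `c₂ - 1` such `p`; each lies in `Y'` at
distance 2 from `v`, and `u`, `w` are two of the `c'₂` common neighbours of `p` and `v`, so
`p` has `c'₂ - 2` such `q`. There are `k' - 2 = b'₀ - 2` such `q`; each is at distance 2 from
both `u` and `w`, and `v` is one of the `γ₂` common neighbours of `u`, `w` adjacent to `q`, so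
`q` has `γ₂ - 1` such `p`. The counts are taken in `ℤ`, where no subtraction truncates.
-/

theorem Set.ncard_mul_eq_ncard_mul {α β R : Type*} [Semiring R] (r : α → β → Prop)
    {s : Set α} {t : Set β} (hs : s.Finite) (ht : t.Finite) {m n : R}
    (hm : ∀ a ∈ s, ({b ∈ t | r a b}.ncard : R) = m)
    (hn : ∀ b ∈ t, ({a ∈ s | r a b}.ncard : R) = n) :
    (s.ncard : R) * m = t.ncard * n := by
  classical
  lift s to Finset α using hs
  lift t to Finset β using ht
  have hm' (a : α) (ha : a ∈ s) : ((t.bipartiteAbove r a).card : R) = m := by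
    rw [← hm a ha, Finset.bipartiteAbove, ← Set.ncard_coe_finset, Finset.coe_filter]
    rfl
  have hn' (b : β) (hb : b ∈ t) : ((s.bipartiteBelow r b).card : R) = n := by
    rw [← hn b hb, Finset.bipartiteBelow, ← Set.ncard_coe_finset, Finset.coe_filter]
    rfl
  calc ((s : Set α).ncard : R) * m = ∑ a ∈ s, ((t.bipartiteAbove r a).card : R) := by
        rw [Finset.sum_congr rfl hm', Finset.sum_const, nsmul_eq_mul, Set.ncard_coe_finset]
    _ = ∑ b ∈ t, ((s.bipartiteBelow r b).card : R) := by
        rw [← Nat.cast_sum, ← Nat.cast_sum,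
          Finset.sum_card_bipartiteAbove_eq_sum_card_bipartiteBelow]
    _ = (t : Set β).ncard * n := by
        rw [Finset.sum_congr rfl hn', Finset.sum_const, nsmul_eq_mul, Set.ncard_coe_finset]

theorem Set.ncard_sdiff_pair_add_two {α : Type*} {s : Set α} {a b : α} (ha : a ∈ s)
    (hb : b ∈ s) (hab : a ≠ b) (hs : s.Finite) : (s \ {a, b}).ncard + 2 = s.ncard := by
  rw [← Set.ncard_pair hab]
  exact Set.ncard_sdiff_add_ncard_of_subset (Set.pair_subset ha hb) hs

namespace SimpleGraph

variable {V : Type*} {G : SimpleGraph V}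

theorem dist_eq_two_of_adj_of_adj_s13 {a b c : V} (hab : G.Adj a b) (hbc : G.Adj b c) (hac : a ≠ c)
    (hnac : ¬ G.Adj a c) : G.dist a c = 2 := by
  have h := G.edist_eq_two_iff.mpr ⟨hac, hnac, b, G.mem_commonNeighbors.mpr ⟨hab, hbc.symm⟩⟩
  exact_mod_cast (hab.reachable.trans hbc.reachable).coe_dist_eq_edist.trans h

theorem exists_adj_adj_ne_of_two_le_dist {u z : V} (h : 2 ≤ G.dist u z) :
    ∃ v w, G.Adj u v ∧ G.Adj v w ∧ u ≠ w := by
  obtain ⟨p, hp, hlen⟩ :=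
    (Reachable.of_dist_ne_zero (by omega : G.dist u z ≠ 0)).exists_path_of_dist
  refine ⟨p.getVert 1, p.getVert 2, by simpa using p.adj_getVert_succ (i := 0) (by omega),
    p.adj_getVert_succ (by omega), fun heq => ?_⟩
  have := hp.getVert_injOn (Nat.zero_le _) (by omega : 2 ≤ p.length) (by simpa using heq)
  omega

end SimpleGraph

namespace DBRG

variable {V : Type} [Fintype V] (Γ : DBRG V)

theorem not_adj_of_adj_of_adj {a b c : V} (hab : Γ.G.Adj a b) (hbc : Γ.G.Adj b c) :
    ¬ Γ.G.Adj a c := fun hac => by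
  have := Γ.bip a b hab; have := Γ.bip b c hbc; have := Γ.bip a c hac
  have := Γ.cover a; have := Γ.cover b; have := Γ.disj a; have := Γ.disj b
  tauto

theorem dist_eq_two_of_adj_of_adj_s13 {a b c : V} (hab : Γ.G.Adj a b) (hbc : Γ.G.Adj b c)
    (hac : a ≠ c) : Γ.G.dist a c = 2 :=
  SimpleGraph.dist_eq_two_of_adj_of_adj_s13 hab hbc hac (Γ.not_adj_of_adj_of_adj hab hbc)

theorem ncard_neighborSet_of_mem_Y' {v : V} (hv : v ∈ Γ.Y') :
    (Γ.G.neighborSet v).ncard = Γ.b' 0 := by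
  rw [← Γ.hb' 0 v hv v SimpleGraph.dist_self]
  congr 1
  ext q
  simp [dist_eq_one_iff_adj]

theorem ncard_commonNeighbors_of_mem_Y {x z : V} (hx : x ∈ Γ.Y) (hxz : Γ.G.dist x z = 2) :
    (Γ.G.commonNeighbors x z).ncard = Γ.c 2 := by
  rw [← Γ.hc 2 (by norm_num) x hx z hxz]
  congr 1
  ext q
  simp [mem_commonNeighbors, dist_eq_one_iff_adj, and_comm]

theorem ncard_commonNeighbors_of_mem_Y' {x z : V} (hx : x ∈ Γ.Y') (hxz : Γ.G.dist x z = 2) :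
    (Γ.G.commonNeighbors x z).ncard = Γ.c' 2 := by
  rw [← Γ.hc' 2 (by norm_num) x hx z hxz]
  congr 1
  ext q
  simp [mem_commonNeighbors, dist_eq_one_iff_adj, and_comm]

theorem TwoYHom.ncard_commonNeighbors_inter_neighborSet {Γ : DBRG V} {γ : ℕ → ℕ}
    (h : Γ.TwoYHom γ) (hD : 3 ≤ Γ.D) {x y z : V} (hx : x ∈ Γ.Y) (hxy : Γ.G.dist x y = 2)
    (hxz : Γ.G.dist x z = 2) (hyz : Γ.G.dist y z = 2) :
    (Γ.G.commonNeighbors x y ∩ Γ.G.neighborSet z).ncard = γ 2 := by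
  rw [← h 2 (by norm_num) (by omega) x hx y hxy z hxz hyz]
  congr 1
  ext q
  simp [mem_commonNeighbors, dist_eq_one_iff_adj, and_comm]

theorem ncard_adj_neighborSet_sdiff_pair {u v w p : V} (hu : u ∈ Γ.Y) (huv : Γ.G.Adj u v)
    (hvw : Γ.G.Adj v w) (huw : u ≠ w) (hp : p ∈ Γ.G.commonNeighbors u w \ {v}) :
    ({q ∈ Γ.G.neighborSet v \ {u, w} | Γ.G.Adj p q}.ncard : ℤ) = Γ.c' 2 - 2 := by
  obtain ⟨hup, hwp⟩ := Γ.G.mem_commonNeighbors.mp hp.1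
  have hpv : Γ.G.dist p v = 2 := Γ.dist_eq_two_of_adj_of_adj_s13 hup.symm huv hp.2
  have hcount := Set.ncard_sdiff_pair_add_two (s := Γ.G.commonNeighbors p v)
    ⟨hup.symm, huv.symm⟩ ⟨hwp.symm, hvw⟩ huw (Set.toFinite _)
  rw [Γ.ncard_commonNeighbors_of_mem_Y' ((Γ.bip u p hup).mp hu) hpv] at hcount
  have hfibre : {q ∈ Γ.G.neighborSet v \ {u, w} | Γ.G.Adj p q} =
      Γ.G.commonNeighbors p v \ {u, w} := by
    ext q
    simp only [Set.mem_ofPred_eq, Set.mem_sdiff, mem_neighborSet, mem_commonNeighbors]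
    tauto
  rw [hfibre]
  omega

theorem TwoYHom.ncard_adj_commonNeighbors_sdiff_singleton {Γ : DBRG V} {γ : ℕ → ℕ}
    (hhom : Γ.TwoYHom γ) (hD : 3 ≤ Γ.D) {u v w q : V} (hu : u ∈ Γ.Y) (huv : Γ.G.Adj u v)
    (hvw : Γ.G.Adj v w) (huw : u ≠ w) (hq : q ∈ Γ.G.neighborSet v \ {u, w}) :
    ({p ∈ Γ.G.commonNeighbors u w \ {v} | Γ.G.Adj p q}.ncard : ℤ) = γ 2 - 1 := by
  obtain ⟨hvq, hqu, hqw⟩ : Γ.G.Adj v q ∧ q ≠ u ∧ q ≠ w := by simpa [not_or] using hq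
  have hcount := Set.ncard_sdiff_singleton_add_one
    (s := Γ.G.commonNeighbors u w ∩ Γ.G.neighborSet q)
    ⟨Γ.G.mem_commonNeighbors.mpr ⟨huv, hvw.symm⟩, hvq.symm⟩
  rw [hhom.ncard_commonNeighbors_inter_neighborSet hD hu
    (Γ.dist_eq_two_of_adj_of_adj_s13 huv hvw huw) (Γ.dist_eq_two_of_adj_of_adj_s13 huv hvq hqu.symm)
    (Γ.dist_eq_two_of_adj_of_adj_s13 hvw.symm hvq hqw.symm)] at hcount
  have hfibre : {p ∈ Γ.G.commonNeighbors u w \ {v} | Γ.G.Adj p q} =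
      (Γ.G.commonNeighbors u w ∩ Γ.G.neighborSet q) \ {v} := by
    ext p
    simp only [Set.mem_ofPred_eq, Set.mem_sdiff, Set.mem_inter_iff, mem_neighborSet,
      Γ.G.adj_comm q]
    tauto
  rw [hfibre]
  omega

theorem TwoYHom.mul_eq_mul_of_adj_of_adj {Γ : DBRG V} {γ : ℕ → ℕ} (hhom : Γ.TwoYHom γ)
    (hD : 3 ≤ Γ.D) {u v w : V} (hu : u ∈ Γ.Y) (huv : Γ.G.Adj u v) (hvw : Γ.G.Adj v w)
    (huw : u ≠ w) :
    ((Γ.c 2 : ℤ) - 1) * ((Γ.c' 2 : ℤ) - 2) = ((Γ.b' 0 : ℤ) - 2) * ((γ 2 : ℤ) - 1) := by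
  have hP : ((Γ.G.commonNeighbors u w \ {v}).ncard : ℤ) = Γ.c 2 - 1 := by
    have hcount := Set.ncard_sdiff_singleton_add_one
      (Γ.G.mem_commonNeighbors.mpr ⟨huv, hvw.symm⟩)
    rw [Γ.ncard_commonNeighbors_of_mem_Y hu (Γ.dist_eq_two_of_adj_of_adj_s13 huv hvw huw)] at hcount
    omega
  have hQ : ((Γ.G.neighborSet v \ {u, w}).ncard : ℤ) = Γ.b' 0 - 2 := by
    have hcount := Set.ncard_sdiff_pair_add_two (s := Γ.G.neighborSet v) huv.symm hvw huw
      (Set.toFinite _)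
    rw [Γ.ncard_neighborSet_of_mem_Y' ((Γ.bip u v huv).mp hu)] at hcount
    omega
  rw [← hP, ← hQ]
  exact Set.ncard_mul_eq_ncard_mul Γ.G.Adj (Set.toFinite _) (Set.toFinite _)
    (fun _ hp => Γ.ncard_adj_neighborSet_sdiff_pair hu huv hvw huw hp)
    (fun _ hq => hhom.ncard_adj_commonNeighbors_sdiff_singleton hD hu huv hvw huw hq)

end DBRG

theorem stmt_13_general {V : Type} [Fintype V] (Γ : DBRG V) (hD : 3 ≤ Γ.D)
    (γ : ℕ → ℕ) (hhom : Γ.TwoYHom γ) :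
    ((Γ.b' 0 : ℤ) - 2) * ((γ 2 : ℤ) - 1) = ((Γ.c 2 : ℤ) - 1) * ((Γ.c' 2 : ℤ) - 2) := by
  obtain ⟨u, hu⟩ := Γ.Yne
  obtain ⟨z, hz⟩ := (Γ.eccY u hu).1
  obtain ⟨v, w, huv, hvw, huw⟩ :=
    exists_adj_adj_ne_of_two_le_dist (G := Γ.G) (u := u) (z := z) (by omega)
  exact (hhom.mul_eq_mul_of_adj_of_adj hD hu huv hvw huw).symm

theorem stmt_13 {V : Type} [Fintype V] (Γ : DBRG V) (hD : 3 ≤ Γ.D)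
    (γ : ℕ → ℕ) (hhom : Γ.TwoYHom γ) (hc2' : 2 ≤ Γ.c' 2) (hγ : γ 2 ≠ 0) :
    ((Γ.b' 0 : ℤ) - 2) * ((γ 2 : ℤ) - 1) = ((Γ.c 2 : ℤ) - 1) * ((Γ.c' 2 : ℤ) - 2) :=
  stmt_13_general Γ hD γ hhom
end

section
/- Let $\Gamma$ be a $2$-$Y$-homogeneous $(Y,Y')$-distance-biregular graph with $D \ge 3$, $k' \ge 2$ and $c'_2 \ge 2$. Then $\gamma_2 \ge 1$ and $c_3 = \frac{c_2(c'_2-1)}{\gamma_2} + 1$. -/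
open SimpleGraph Set

/-!
Fix `x ∈ Y`, `y ∈ Γ₂(x)` and a neighbour `u ∈ Γ₃(x)` of `y`, and count the edges between
`Z = Γ(u) ∩ Γ₂(x) \ {y}` and `W = Γ(x) ∩ Γ(y)` in two ways. Every `z ∈ Z` lies in `Γ₂(y)`,
so it has `γ₂` neighbours in `W`; every `w ∈ W` lies in `Y'` at distance `2` from `u`, so `u`
and `w` have `c'₂` common neighbours, one of which is `y`, and all of them lie in `Γ₂(x)`.
Hence `(c₃ - 1) γ₂ = c₂ (c'₂ - 1)`, whose right-hand side is positive.
-/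

open Finset

namespace SimpleGraph

variable {V : Type*} {G : SimpleGraph V}

lemma Connected.exists_dist_eq_of_le_dist (hG : G.Connected) {x y : V} {k : ℕ}
    (hk : k ≤ G.dist x y) : ∃ u, G.dist x u = k ∧ G.dist u y = G.dist x y - k := by
  obtain ⟨p, hp⟩ := hG.exists_walk_length_eq_dist x y
  have hxu : G.dist x (p.getVert k) ≤ k := (dist_le (p.take k)).trans (by simp [Walk.take_length])
  have huy : G.dist (p.getVert k) y ≤ G.dist x y - k :=
    (dist_le (p.drop k)).trans (by simp [Walk.drop_length, hp])
  have := hG.dist_triangle (u := x) (v := p.getVert k) (w := y)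
  exact ⟨p.getVert k, by omega, by omega⟩

lemma dist_eq_two_of_adj_of_adj_s15 {u v w : V} (hne : u ≠ v) (hnadj : ¬G.Adj u v)
    (huw : G.Adj u w) (hwv : G.Adj w v) : G.dist u v = 2 := by
  have hle : G.dist u v ≤ 2 := dist_le (.cons huw (.cons hwv .nil))
  have hpos : G.dist u v ≠ 0 := dist_ne_zero_iff_ne_and_reachable.mpr
    ⟨hne, (Walk.cons huw (.cons hwv .nil)).reachable⟩
  have hone : G.dist u v ≠ 1 := fun h => hnadj (dist_eq_one_iff_adj.mp h)
  omega

end SimpleGraph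

namespace DBRG

open SimpleGraph

variable {V : Type} [Fintype V] (Γ : DBRG V)

lemma mem_Y'_of_adj {x w : V} (hx : x ∈ Γ.Y) (h : Γ.G.Adj x w) : w ∈ Γ.Y' :=
  (Γ.bip x w h).mp hx

lemma mem_Y_of_adj {w z : V} (hw : w ∈ Γ.Y') (h : Γ.G.Adj w z) : z ∈ Γ.Y :=
  (Γ.cover z).resolve_right fun hz => Γ.disj w ⟨(Γ.bip w z h).mpr hz, hw⟩

lemma not_adj_of_mem_Y {x z : V} (hx : x ∈ Γ.Y) (hz : z ∈ Γ.Y) : ¬Γ.G.Adj x z :=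
  fun h => Γ.disj z ⟨hz, Γ.mem_Y'_of_adj hx h⟩

lemma not_adj_of_mem_Y' {w v : V} (hw : w ∈ Γ.Y') (hv : v ∈ Γ.Y') : ¬Γ.G.Adj w v :=
  fun h => Γ.disj v ⟨Γ.mem_Y_of_adj hw h, hv⟩

lemma c_pos {i : ℕ} (hi : 1 ≤ i) {x z : V} (hx : x ∈ Γ.Y) (hz : Γ.G.dist x z = i) :
    0 < Γ.c i := by
  obtain ⟨w, hxw, hwz⟩ :=
    Γ.conn.exists_dist_eq_of_le_dist (x := x) (y := z) (k := i - 1) (by omega)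
  rw [← Γ.hc i hi x hx z hz, Set.ncard_pos]
  exact ⟨w, (dist_eq_one_iff_adj.mp (by omega)).symm, hxw⟩

lemma exists_dist_eq_two_adj_dist_eq_three (hD : 3 ≤ Γ.D) :
    ∃ x ∈ Γ.Y, ∃ y u, Γ.G.dist x y = 2 ∧ Γ.G.dist x u = 3 ∧ Γ.G.Adj y u := by
  obtain ⟨x, hx⟩ := Γ.Yne
  obtain ⟨⟨t, hxt⟩, -⟩ := Γ.eccY x hx
  obtain ⟨u, hxu, -⟩ := Γ.conn.exists_dist_eq_of_le_dist (x := x) (y := t) (k := 3) (by omega)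
  obtain ⟨y, hxy, hyu⟩ := Γ.conn.exists_dist_eq_of_le_dist (x := x) (y := u) (k := 2) (by omega)
  exact ⟨x, hx, y, u, hxy, hxu, dist_eq_one_iff_adj.mp (by omega)⟩

lemma mem_Y_of_dist_eq_two {x y : V} (hx : x ∈ Γ.Y) (hxy : Γ.G.dist x y = 2) : y ∈ Γ.Y := by
  obtain ⟨m, hxm, hmy⟩ := Γ.conn.exists_dist_eq_of_le_dist (x := x) (y := y) (k := 1) (by omega)
  exact Γ.mem_Y_of_adj (Γ.mem_Y'_of_adj hx (dist_eq_one_iff_adj.mp hxm))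
    (dist_eq_one_iff_adj.mp (by omega))

section Counting

open Classical

lemma card_commonNbrs_eq_c_two {x y : V} (hx : x ∈ Γ.Y) (hxy : Γ.G.dist x y = 2) :
    #{w | Γ.G.Adj x w ∧ Γ.G.Adj y w} = Γ.c 2 := by
  rw [← Γ.hc 2 one_le_two x hx y hxy, ← Set.ncard_coe_finset, coe_filter_univ]
  simp only [Nat.add_one_sub_one, dist_eq_one_iff_adj, and_comm]

lemma card_adj_dist_eq_two_eq_c_three {x u : V} (hx : x ∈ Γ.Y) (hxu : Γ.G.dist x u = 3) :
    #{z | Γ.G.Adj u z ∧ Γ.G.dist x z = 2} = Γ.c 3 := by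
  rw [← Γ.hc 3 (by norm_num) x hx u hxu, ← Set.ncard_coe_finset, coe_filter_univ]

lemma card_commonNbrs_eq_c'_two {w u : V} (hw : w ∈ Γ.Y') (hwu : Γ.G.dist w u = 2) :
    #{z | Γ.G.Adj u z ∧ Γ.G.Adj w z} = Γ.c' 2 := by
  rw [← Γ.hc' 2 one_le_two w hw u hwu, ← Set.ncard_coe_finset, coe_filter_univ]
  simp only [Nat.add_one_sub_one, dist_eq_one_iff_adj]

lemma card_commonNbrs_three_eq_gamma_two {γ : ℕ → ℕ} (hhom : Γ.TwoYHom γ) (hD : 3 ≤ Γ.D)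
    {x y z : V} (hx : x ∈ Γ.Y) (hxy : Γ.G.dist x y = 2) (hxz : Γ.G.dist x z = 2)
    (hyz : Γ.G.dist y z = 2) :
    #{w | Γ.G.Adj x w ∧ Γ.G.Adj y w ∧ Γ.G.Adj z w} = γ 2 := by
  rw [← hhom 2 one_le_two (by omega) x hx y hxy z hxz hyz, ← Set.ncard_coe_finset,
    coe_filter_univ]
  simp only [Nat.add_one_sub_one, dist_eq_one_iff_adj, and_rotate]

lemma c_three_sub_one_mul_gamma_two {γ : ℕ → ℕ} (hhom : Γ.TwoYHom γ) (hD : 3 ≤ Γ.D)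
    {x y u : V} (hx : x ∈ Γ.Y) (hxy : Γ.G.dist x y = 2) (hxu : Γ.G.dist x u = 3)
    (hyu : Γ.G.Adj y u) :
    (Γ.c 3 - 1) * γ 2 = Γ.c 2 * (Γ.c' 2 - 1) := by
  have hy : y ∈ Γ.Y := Γ.mem_Y_of_dist_eq_two hx hxy
  have hu : u ∈ Γ.Y' := Γ.mem_Y'_of_adj hy hyu
  have ne_of_adj_u {z : V} (huz : Γ.G.Adj u z) : x ≠ z := by
    rintro rfl
    have := dist_eq_one_iff_adj.mpr huz.symm
    omega
  set Z : Finset V := ({z | Γ.G.Adj u z ∧ Γ.G.dist x z = 2} : Finset V).erase y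
  set W : Finset V := {w | Γ.G.Adj x w ∧ Γ.G.Adj y w}
  have hZ : #Z = Γ.c 3 - 1 := by
    rw [card_erase_of_mem (by simp [hyu.symm, hxy]), Γ.card_adj_dist_eq_two_eq_c_three hx hxu]
  have fiber_Z : ∀ z ∈ Z, #(W.bipartiteAbove Γ.G.Adj z) = γ 2 := by
    intro z hz
    obtain ⟨hzy, huz, hxz⟩ : z ≠ y ∧ Γ.G.Adj u z ∧ Γ.G.dist x z = 2 := by simpa [Z] using hz
    have hyz : Γ.G.dist y z = 2 := dist_eq_two_of_adj_of_adj_s15 (Ne.symm hzy)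
      (Γ.not_adj_of_mem_Y hy (Γ.mem_Y_of_adj hu huz)) hyu huz
    rw [← Γ.card_commonNbrs_three_eq_gamma_two hhom hD hx hxy hxz hyz]
    congr 1
    ext w
    simp [W, bipartiteAbove, and_assoc]
  have fiber_W : ∀ w ∈ W, #(Z.bipartiteBelow Γ.G.Adj w) = Γ.c' 2 - 1 := by
    intro w hw
    obtain ⟨hxw, hyw⟩ : Γ.G.Adj x w ∧ Γ.G.Adj y w := by simpa [W] using hw
    have hwY' : w ∈ Γ.Y' := Γ.mem_Y'_of_adj hx hxw
    have hwu : Γ.G.dist w u = 2 := dist_eq_two_of_adj_of_adj_s15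
      (by rintro rfl; exact ne_of_adj_u hxw.symm rfl) (Γ.not_adj_of_mem_Y' hwY' hu) hyw.symm hyu
    have hZw :
        Z.bipartiteBelow Γ.G.Adj w = ({z | Γ.G.Adj u z ∧ Γ.G.Adj w z} : Finset V).erase y := by
      ext z
      simp only [Z, bipartiteBelow, mem_filter, mem_erase, Finset.mem_univ, true_and]
      constructor
      · rintro ⟨⟨hzy, huz, -⟩, hzw⟩
        exact ⟨hzy, huz, hzw.symm⟩
      · rintro ⟨hzy, huz, hwz⟩
        exact ⟨⟨hzy, huz, dist_eq_two_of_adj_of_adj_s15 (ne_of_adj_u huz)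
          (Γ.not_adj_of_mem_Y hx (Γ.mem_Y_of_adj hwY' hwz)) hxw hwz⟩, hwz.symm⟩
    rw [hZw, card_erase_of_mem (by simp [hyu.symm, hyw.symm]),
      Γ.card_commonNbrs_eq_c'_two hwY' hwu]
  rw [← hZ, ← Γ.card_commonNbrs_eq_c_two hx hxy, card_mul_eq_card_mul Γ.G.Adj fiber_Z fiber_W]

end Counting

end DBRG

theorem stmt_15_general {V : Type} [Fintype V] (Γ : DBRG V) (hD : 3 ≤ Γ.D)
    (γ : ℕ → ℕ) (hhom : Γ.TwoYHom γ) (hc2' : 2 ≤ Γ.c' 2) :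
    1 ≤ γ 2 ∧ (Γ.c 3 : ℚ) = (Γ.c 2 : ℚ) * ((Γ.c' 2 : ℚ) - 1) / (γ 2 : ℚ) + 1 := by
  obtain ⟨x, hx, y, u, hxy, hxu, hyu⟩ := Γ.exists_dist_eq_two_adj_dist_eq_three hD
  have key := Γ.c_three_sub_one_mul_gamma_two hhom hD hx hxy hxu hyu
  have hrhs : 0 < Γ.c 2 * (Γ.c' 2 - 1) := Nat.mul_pos (Γ.c_pos one_le_two hx hxy) (by omega)
  obtain ⟨hc3, hγ⟩ := CanonicallyOrderedAdd.mul_pos.mp (key ▸ hrhs)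
  refine ⟨hγ, ?_⟩
  have hkey : ((Γ.c 3 : ℚ) - 1) * γ 2 = Γ.c 2 * ((Γ.c' 2 : ℚ) - 1) := by
    have := congrArg (Nat.cast : ℕ → ℚ) key
    push_cast [Nat.cast_sub (by omega : 1 ≤ Γ.c 3), Nat.cast_sub (by omega : 1 ≤ Γ.c' 2)] at this
    exact this
  field_simp
  linear_combination hkey

theorem stmt_15 {V : Type} [Fintype V] (Γ : DBRG V) (hD : 3 ≤ Γ.D)
    (γ : ℕ → ℕ) (hhom : Γ.TwoYHom γ) (hk' : 2 ≤ Γ.b' 0) (hc2' : 2 ≤ Γ.c' 2) :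
    1 ≤ γ 2 ∧ (Γ.c 3 : ℚ) = (Γ.c 2 : ℚ) * ((Γ.c' 2 : ℚ) - 1) / (γ 2 : ℚ) + 1 :=
  stmt_15_general Γ hD γ hhom hc2'
end
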